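/- arXiv:2007.01631 — 3 statements merged into one kernel-verified Lean document; each statement's English description precedes it below -/
import Mathlib

section
/- Let t > 0 and let h₁, h₂ ∈ ℝ satisfy 0 < h₁ ≤ 1/t and −1/t ≤ h₂ < 0. Then the difference quotients of h ↦ δ_{(1+h)t} fail the Cauchy condition in the flat metric: ρ_F( h₁⁻¹·(δ_{(1+h₁)t} − δ_t), h₂⁻¹·(δ_{(1+h₂)t} − δ_t) ) ≥ 2t. Consequently h ↦ δ_{(1+h)t} is not differentiable at h = 0 with respect to ρ_F. -/
open MeasureTheory Filter Topology

/-- Integral of a real-valued function against a finite signed Borel measure,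
via the Jordan decomposition. -/
noncomputable def sInt (μ : SignedMeasure ℝ) (f : ℝ → ℝ) : ℝ :=
  (∫ x, f x ∂μ.toJordanDecomposition.posPart) -
    ∫ x, f x ∂μ.toJordanDecomposition.negPart

/-- The flat metric (bounded Lipschitz distance) between finite signed Borel
measures on `ℝ`. -/
noncomputable def flatDist (μ ν : SignedMeasure ℝ) : ℝ :=
  sSup {r : ℝ | ∃ f : ℝ → ℝ, (∀ x, |f x| ≤ 1) ∧ LipschitzWith 1 f ∧ r = sInt (μ - ν) f}

/-- The Dirac measure at `a ∈ ℝ`, as a finite signed measure. -/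
noncomputable def diracSM (a : ℝ) : SignedMeasure ℝ :=
  (MeasureTheory.Measure.dirac a).toSignedMeasure

/-- The difference quotient `h⁻¹ • (δ_{(1+h)t} − δ_t)` of `h ↦ δ_{(1+h)t}`. -/
noncomputable def diffQuot (t h : ℝ) : SignedMeasure ℝ :=
  h⁻¹ • (diracSM ((1 + h) * t) - diracSM t)

/-!
Test the difference of the two quotients against `g x = min (|x - t|, 1)`. For `|h| ≤ 1/t` it takes
the value `|h| t` at `(1 + h) t` and `0` at `t`, so `∫ g d(diffQuot t h) = sign h · t`: quotients
from the two sides of `0` are at least `2t` apart, and by the triangle inequality they cannot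
converge to a common limit.
-/

open scoped NNReal BoundedContinuousFunction

section sInt

variable (f : ℝ →ᵇ ℝ)

theorem sInt_toSignedMeasure_sub (μ ν : Measure ℝ) [IsFiniteMeasure μ] [IsFiniteMeasure ν] :
    sInt (μ.toSignedMeasure - ν.toSignedMeasure) f = ∫ x, f x ∂μ - ∫ x, f x ∂ν := by
  set j := (μ.toSignedMeasure - ν.toSignedMeasure).toJordanDecomposition
  have hsum : j.posPart + ν = j.negPart + μ := by
    rw [← Measure.toSignedMeasure_eq_toSignedMeasure_iff, Measure.toSignedMeasure_add,
      Measure.toSignedMeasure_add]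
    have := (μ.toSignedMeasure - ν.toSignedMeasure).toSignedMeasure_toJordanDecomposition
    rw [JordanDecomposition.toSignedMeasure] at this
    linear_combination (norm := abel) this
  have hint := congrArg (fun m : Measure ℝ => ∫ x, f x ∂m) hsum
  simp only [integral_add_measure (f.integrable _) (f.integrable _)] at hint
  rw [sInt]
  linarith

theorem sInt_sub (σ τ : SignedMeasure ℝ) : sInt (σ - τ) f = sInt σ f - sInt τ f := by
  set jσ := σ.toJordanDecomposition
  set jτ := τ.toJordanDecomposition
  have hdecomp : σ - τ = (jσ.posPart + jτ.negPart).toSignedMeasure -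
      (jσ.negPart + jτ.posPart).toSignedMeasure := by
    rw [Measure.toSignedMeasure_add, Measure.toSignedMeasure_add]
    nth_rewrite 1 [← σ.toSignedMeasure_toJordanDecomposition,
      ← τ.toSignedMeasure_toJordanDecomposition]
    simp only [JordanDecomposition.toSignedMeasure]
    abel
  rw [hdecomp, sInt_toSignedMeasure_sub, integral_add_measure (f.integrable _) (f.integrable _),
    integral_add_measure (f.integrable _) (f.integrable _), sInt, sInt]
  ring

theorem sInt_zero : sInt 0 f = 0 := by
  simp [sInt, SignedMeasure.toJordanDecomposition_zero]

theorem sInt_neg (σ : SignedMeasure ℝ) : sInt (-σ) f = -sInt σ f := by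
  rw [← zero_sub, sInt_sub, sInt_zero, zero_sub]

theorem sInt_nnreal_smul (c : ℝ≥0) (σ : SignedMeasure ℝ) : sInt (c • σ) f = c * sInt σ f := by
  rw [sInt, SignedMeasure.toJordanDecomposition_smul, JordanDecomposition.smul_posPart,
    JordanDecomposition.smul_negPart, integral_smul_nnreal_measure, integral_smul_nnreal_measure,
    sInt, NNReal.smul_def, NNReal.smul_def, smul_eq_mul, smul_eq_mul, mul_sub]

theorem sInt_smul (r : ℝ) (σ : SignedMeasure ℝ) : sInt (r • σ) f = r * sInt σ f := by
  rcases le_or_gt 0 r with hr | hr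
  · lift r to ℝ≥0 using hr
    rw [← NNReal.smul_def, sInt_nnreal_smul]
  · have : r • σ = -((-r).toNNReal • σ) := by
      rw [NNReal.smul_def, Real.coe_toNNReal _ (by linarith)]
      module
    rw [this, sInt_neg, sInt_nnreal_smul, Real.coe_toNNReal _ (by linarith)]
    ring

theorem sInt_diracSM (a : ℝ) : sInt (diracSM a) f = f a := by
  have : diracSM a = (Measure.dirac a).toSignedMeasure - (0 : Measure ℝ).toSignedMeasure := by
    simp [diracSM]
  rw [this, sInt_toSignedMeasure_sub, integral_dirac, integral_zero_measure, sub_zero]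

theorem sInt_diffQuot (t h : ℝ) : sInt (diffQuot t h) f = h⁻¹ * (f ((1 + h) * t) - f t) := by
  rw [diffQuot, sInt_smul, sInt_sub, sInt_diracSM, sInt_diracSM]

end sInt

theorem sInt_neg_fun (σ : SignedMeasure ℝ) (f : ℝ → ℝ) : sInt σ (-f) = -sInt σ f := by
  simp only [sInt, Pi.neg_apply, integral_neg]
  ring

theorem sInt_le_totalVariation_univ {f : ℝ → ℝ} (hb : ∀ x, |f x| ≤ 1) (σ : SignedMeasure ℝ) :
    sInt σ f ≤ σ.totalVariation.real Set.univ := by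
  have hmass : ∀ (μ : Measure ℝ) [IsFiniteMeasure μ], |∫ x, f x ∂μ| ≤ μ.real Set.univ := by
    intro μ _
    simpa using norm_integral_le_of_norm_le_const (μ := μ) (C := 1) (f := f) (.of_forall hb)
  have hpos := abs_le.mp (hmass σ.toJordanDecomposition.posPart)
  have hneg := abs_le.mp (hmass σ.toJordanDecomposition.negPart)
  rw [sInt, SignedMeasure.totalVariation, measureReal_add_apply]
  linarith [hpos.2, hneg.1]

section flatDist

variable (μ ν : SignedMeasure ℝ)

theorem le_flatDist {f : ℝ → ℝ} (hb : ∀ x, |f x| ≤ 1) (hl : LipschitzWith 1 f) :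
    sInt (μ - ν) f ≤ flatDist μ ν := by
  refine le_csSup ⟨(μ - ν).totalVariation.real Set.univ, ?_⟩ ⟨f, hb, hl, rfl⟩
  rintro r ⟨g, hgb, -, rfl⟩
  exact sInt_le_totalVariation_univ hgb _

theorem flatDist_le_add (L : SignedMeasure ℝ) : flatDist μ ν ≤ flatDist μ L + flatDist ν L := by
  refine csSup_le ⟨0, 0, by simp, LipschitzWith.const' 0, by simp [sInt]⟩ ?_
  rintro r ⟨f, hb, hl, rfl⟩
  let g : ℝ →ᵇ ℝ := .ofNormedAddCommGroup f hl.continuous 1 hb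
  have hsplit : sInt (μ - ν) f = sInt (μ - L) f + sInt (ν - L) (-f) := by
    rw [sInt_neg_fun, show μ - ν = (μ - L) - (ν - L) by abel]
    exact sInt_sub g _ _
  rw [hsplit]
  exact add_le_add (le_flatDist μ L hb hl)
    (le_flatDist ν L (fun x => by simpa using hb x) hl.neg)

end flatDist

theorem min_dist_one_mul_self {t h : ℝ} (ht : 0 < t) (hh : |h| ≤ 1 / t) :
    min (dist ((1 + h) * t) t) 1 = |h| * t := by
  rw [Real.dist_eq, show (1 + h) * t - t = h * t by ring, abs_mul, abs_of_pos ht]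
  exact min_eq_left ((le_div_iff₀ ht).mp hh)

theorem two_mul_le_flatDist_diffQuot {t h₁ h₂ : ℝ} (ht : 0 < t) (hh₁ : 0 < h₁)
    (hh₁' : h₁ ≤ 1 / t) (hh₂ : -(1 / t) ≤ h₂) (hh₂' : h₂ < 0) :
    2 * t ≤ flatDist (diffQuot t h₁) (diffQuot t h₂) := by
  have hg : ∀ x, |min (dist x t) 1| ≤ 1 := fun x => by simp [abs_of_nonneg, dist_nonneg]
  let g : ℝ →ᵇ ℝ := .ofNormedAddCommGroup (fun x => min (dist x t) 1) (by fun_prop) 1 hg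
  have hgl : LipschitzWith 1 g := (LipschitzWith.dist_left t).min_const 1
  have hval : sInt (diffQuot t h₁ - diffQuot t h₂) g = 2 * t := by
    rw [sInt_sub, sInt_diffQuot, sInt_diffQuot]
    simp only [g, BoundedContinuousFunction.coe_ofNormedAddCommGroup, dist_self,
      min_eq_left zero_le_one, sub_zero]
    rw [min_dist_one_mul_self ht (by rwa [abs_of_pos hh₁]),
      min_dist_one_mul_self ht (by rw [abs_of_neg hh₂']; linarith),
      abs_of_pos hh₁, abs_of_neg hh₂']
    field_simp [hh₂'.ne]
    ring
  exact hval ▸ le_flatDist _ _ hg hgl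

/-- for `t > 0`, `0 < h₁ ≤ 1/t` and `−1/t ≤ h₂ < 0`, the difference
quotients of `h ↦ δ_{(1+h)t}` are at flat distance at least `2t`; consequently
`h ↦ δ_{(1+h)t}` is not differentiable at `h = 0` with respect to the flat metric. -/
theorem stmt1 (t h₁ h₂ : ℝ) (ht : 0 < t) (hh₁ : 0 < h₁) (hh₁' : h₁ ≤ 1 / t)
    (hh₂ : -(1 / t) ≤ h₂) (hh₂' : h₂ < 0) :
    2 * t ≤ flatDist (diffQuot t h₁) (diffQuot t h₂) ∧
    ¬ ∃ L : SignedMeasure ℝ,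
        Tendsto (fun h : ℝ => flatDist (diffQuot t h) L) (𝓝[≠] (0 : ℝ)) (𝓝 0) := by
  refine ⟨two_mul_le_flatDist_diffQuot ht hh₁ hh₁' hh₂ hh₂', ?_⟩
  rintro ⟨L, hL⟩
  have hclose : ∀ᶠ h in 𝓝[≠] (0 : ℝ), flatDist (diffQuot t h) L < t / 2 :=
    hL.eventually (gt_mem_nhds (by positivity))
  have hneg : Tendsto (fun h : ℝ => -h) (𝓝[>] 0) (𝓝[≠] 0) :=
    tendsto_nhdsWithin_of_tendsto_nhds_of_eventually_within _
      ((continuous_neg.tendsto' 0 0 neg_zero).mono_left nhdsWithin_le_nhds)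
      (eventually_nhdsWithin_of_forall fun h hh => neg_ne_zero.2 (ne_of_gt hh))
  have hsmall : ∀ᶠ h in 𝓝[>] (0 : ℝ), 0 < h ∧ h ≤ 1 / t ∧
      flatDist (diffQuot t h) L < t / 2 ∧ flatDist (diffQuot t (-h)) L < t / 2 := by
    filter_upwards [eventually_mem_nhdsWithin,
      nhdsWithin_le_nhds (eventually_le_nhds (by positivity : (0 : ℝ) < 1 / t)),
      nhdsGT_le_nhdsNE 0 hclose, hneg.eventually hclose] with h hpos hle hclose₁ hclose₂
    exact ⟨hpos, hle, hclose₁, hclose₂⟩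
  obtain ⟨h, hpos, hle, hclose₁, hclose₂⟩ := hsmall.exists
  have hlow := two_mul_le_flatDist_diffQuot ht hpos hle (neg_le_neg hle) (neg_lt_zero.2 hpos)
  linarith [flatDist_le_add (diffQuot t h) (diffQuot t (-h)) L]
end

section
/- Fix 0 < α ≤ 1, let u : ℝ → ℝ^m be three times continuously differentiable with u, u', u'', u''' bounded and u''' α-Hölder (i.e. u ∈ C^{3+α}), and let K be an admissible kernel. Then there exists a constant C ≥ 0, depending only on u, K, α and d, such that for every finite signed Borel measure μ on ℝ^d: ‖u∘k_μ‖_{C^{1+α}} ≤ C·(1 + ‖μ‖_* + ‖μ‖_*²). -/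
open MeasureTheory Set

/-- Integral of a Banach-space-valued function against a finite signed Borel
measure, via the Jordan decomposition. -/
noncomputable def sIntV {X : Type*} [MeasurableSpace X] {F : Type*}
    [NormedAddCommGroup F] [NormedSpace ℝ F]
    (μ : SignedMeasure X) (f : X → F) : F :=
  (∫ x, f x ∂μ.toJordanDecomposition.posPart) -
    ∫ x, f x ∂μ.toJordanDecomposition.negPart

/-- The `(C^{1+α})^*` dual norm of a finite signed Borel measure on `ℝ^d`. -/
noncomputable def dualNorm {d : ℕ} (α : ℝ)
    (μ : SignedMeasure (EuclideanSpace ℝ (Fin d))) : ℝ :=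
  sSup {r : ℝ | ∃ f : EuclideanSpace ℝ (Fin d) → ℝ, ContDiff ℝ 1 f ∧
    (∃ a b c : ℝ, a + b + c ≤ 1 ∧ (∀ x, |f x| ≤ a) ∧ (∀ x, ‖fderiv ℝ f x‖ ≤ b) ∧
      ∀ x y, ‖fderiv ℝ f x - fderiv ℝ f y‖ ≤ c * ‖x - y‖ ^ α) ∧
    r = sIntV μ f}

/-- `f` belongs to `C^{1+α}` with `‖f‖_{C^{1+α}} ≤ B`. -/
def MemC1aLE {E F : Type*} [NormedAddCommGroup E] [NormedSpace ℝ E]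
    [NormedAddCommGroup F] [NormedSpace ℝ F] (α : ℝ) (f : E → F) (B : ℝ) : Prop :=
  ContDiff ℝ 1 f ∧ ∃ a b c : ℝ, a + b + c ≤ B ∧ (∀ x, ‖f x‖ ≤ a) ∧
    (∀ x, ‖fderiv ℝ f x‖ ≤ b) ∧
    ∀ x y, ‖fderiv ℝ f x - fderiv ℝ f y‖ ≤ c * ‖x - y‖ ^ α

/-!
Differentiating under the integral sign, `k_μ`, `∇k_μ` and `∇k_μ(x₁) - ∇k_μ(x₂)` are pairings of
`μ` with `K(·, x)`, `∇ₓK(·, x)` and `∇ₓK(·, x₁) - ∇ₓK(·, x₂)`, whose `C^{1+α}` norms are at most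
`M`, `M'` and `H |x₁ - x₂|^α` (vector-valued pairings are estimated through a norming functional).
Hence `‖k_μ‖_{C^{1+α}} ≤ (M + M' + H) ‖μ‖_*`. As `α ≤ 1`, a bounded Lipschitz function is
`α`-Hölder, so `k_μ` is `α`-Hölder with constant `O(‖μ‖_*)`. In `∇(u ∘ k_μ) = u'(k_μ) ∇k_μ` the
Hölder quotient of `u'(k_μ)` is at most `‖u''‖_∞` times that of `k_μ`, and it multiplies `∇k_μ`:
this product is the quadratic term.
-/

section Holder

variable {E F : Type*} [SeminormedAddCommGroup E] [SeminormedAddCommGroup F]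

theorem continuous_of_norm_sub_le_rpow {f : E → F} {C α : ℝ} (hα : 0 < α)
    (h : ∀ x y, ‖f x - f y‖ ≤ C * ‖x - y‖ ^ α) : Continuous f := by
  refine continuous_iff_continuousAt.2 fun x₀ => tendsto_iff_norm_sub_tendsto_zero.2 <|
    squeeze_zero (fun _ => norm_nonneg _) (fun x => h x x₀) ?_
  have : Continuous fun x => C * ‖x - x₀‖ ^ α :=
    continuous_const.mul ((continuous_id.sub continuous_const).norm.rpow_const
      fun _ => Or.inr hα.le)
  simpa [Real.zero_rpow hα.ne'] using this.tendsto x₀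

theorem norm_sub_le_rpow_of_norm_le_of_lipschitz {f : E → F} {A L α : ℝ} (hα₀ : 0 ≤ α)
    (hα₁ : α ≤ 1) (hL : 0 ≤ L) (hfA : ∀ x, ‖f x‖ ≤ A) (hfL : ∀ x y, ‖f x - f y‖ ≤ L * ‖x - y‖)
    (x y : E) : ‖f x - f y‖ ≤ (L + 2 * A) * ‖x - y‖ ^ α := by
  have hA : 0 ≤ A := (norm_nonneg _).trans (hfA x)
  rcases le_total ‖x - y‖ 1 with h | h
  · calc ‖f x - f y‖ ≤ L * ‖x - y‖ := hfL x y
      _ ≤ L * ‖x - y‖ ^ α := by gcongr; exact Real.self_le_rpow_of_le_one (norm_nonneg _) h hα₁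
      _ ≤ (L + 2 * A) * ‖x - y‖ ^ α := by gcongr; linarith
  · calc ‖f x - f y‖ ≤ (L + 2 * A) * 1 := by linarith [norm_sub_le (f x) (f y), hfA x, hfA y]
      _ ≤ (L + 2 * A) * ‖x - y‖ ^ α := by gcongr; exact Real.one_le_rpow h hα₀

end Holder

theorem nonneg_of_norm_sub_le_mul_rpow {E F : Type*} [NormedAddCommGroup E] [Nontrivial E]
    [SeminormedAddCommGroup F] {D : E → F} {c α : ℝ}
    (hc : ∀ x y, ‖D x - D y‖ ≤ c * ‖x - y‖ ^ α) : 0 ≤ c := by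
  obtain ⟨x, hx⟩ := exists_ne (0 : E)
  have := (norm_nonneg _).trans (hc x 0)
  rw [sub_zero] at this
  exact nonneg_of_mul_nonneg_left this (Real.rpow_pos_of_pos (norm_pos_iff.2 hx) α)

namespace MemC1aLE

variable {E F G : Type*} [NormedAddCommGroup E] [NormedSpace ℝ E] [NormedAddCommGroup F]
  [NormedSpace ℝ F] [NormedAddCommGroup G] [NormedSpace ℝ G] {α B : ℝ} {f : E → F}

theorem mono {B' : ℝ} (h : MemC1aLE α f B) (hB : B ≤ B') : MemC1aLE α f B' := by
  obtain ⟨hf, a, b, c, habc, hfa⟩ := h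
  exact ⟨hf, a, b, c, habc.trans hB, hfa⟩

theorem clm_comp (h : MemC1aLE α f B) (L : F →L[ℝ] G) :
    MemC1aLE α (fun x => L (f x)) (‖L‖ * B) := by
  obtain ⟨hf, a, b, c, habc, ha, hb, hc⟩ := h
  have hfd : ∀ x, fderiv ℝ (fun x => L (f x)) x = L.comp (fderiv ℝ f x) := fun x =>
    (L.hasFDerivAt.comp x (hf.differentiable one_ne_zero x).hasFDerivAt).fderiv
  refine ⟨L.contDiff.comp hf, ‖L‖ * a, ‖L‖ * b, ‖L‖ * c, ?_, fun x => ?_, fun x => ?_,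
    fun x y => ?_⟩
  · nlinarith [norm_nonneg L]
  · exact (L.le_opNorm _).trans (by gcongr; exact ha x)
  · rw [hfd]
    exact (L.opNorm_comp_le _).trans (by gcongr; exact hb x)
  · rw [hfd, hfd, ← ContinuousLinearMap.comp_sub, mul_assoc]
    exact (L.opNorm_comp_le _).trans (by gcongr; exact hc x y)

theorem const_smul [Nontrivial F] (h : MemC1aLE α f B) (c : ℝ) :
    MemC1aLE α (fun x => c • f x) (|c| * B) := by
  simpa [norm_smul] using h.clm_comp (c • ContinuousLinearMap.id ℝ F)

theorem norm_le [Nontrivial E] (h : MemC1aLE α f B) (x : E) : ‖f x‖ ≤ B := by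
  obtain ⟨-, a, b, c, habc, ha, hb, hc⟩ := h
  linarith [ha x, (norm_nonneg _).trans (hb x), nonneg_of_norm_sub_le_mul_rpow hc]

theorem nonneg [Nontrivial E] (h : MemC1aLE α f B) : 0 ≤ B :=
  (norm_nonneg _).trans (h.norm_le 0)

theorem comp [Nontrivial E] {k : E → F} {u : F → G} {A₀ A₁ A₂ : ℝ} (hk : MemC1aLE α k B)
    (hα₀ : 0 ≤ α) (hα₁ : α ≤ 1) (hu : ContDiff ℝ 1 u) (hu₀ : ∀ t, ‖u t‖ ≤ A₀)
    (hu₁ : ∀ t, ‖fderiv ℝ u t‖ ≤ A₁) (hu₂ : ∀ s t, ‖fderiv ℝ u s - fderiv ℝ u t‖ ≤ A₂ * ‖s - t‖)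
    (hA₂ : 0 ≤ A₂) :
    MemC1aLE α (fun x => u (k x)) (A₀ + A₁ * B + 2 * A₂ * B ^ 2) := by
  obtain ⟨hk₁, a, b, c, habc, ha, hb, hc⟩ := hk
  have ha₀ : 0 ≤ a := (norm_nonneg _).trans (ha 0)
  have hb₀ : 0 ≤ b := (norm_nonneg _).trans (hb 0)
  have hc₀ : 0 ≤ c := nonneg_of_norm_sub_le_mul_rpow hc
  have hA₁ : 0 ≤ A₁ := (norm_nonneg _).trans (hu₁ 0)
  have hkd : Differentiable ℝ k := hk₁.differentiable one_ne_zero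
  have hfd : ∀ x, fderiv ℝ (fun x => u (k x)) x = (fderiv ℝ u (k x)).comp (fderiv ℝ k x) :=
    fun x => fderiv_comp x ((hu.differentiable one_ne_zero) (k x)) (hkd x)
  have hkL : ∀ x y, ‖k x - k y‖ ≤ b * ‖x - y‖ := fun x y =>
    convex_univ.norm_image_sub_le_of_norm_fderiv_le (fun z _ => hkd z) (fun z _ => hb z)
      (mem_univ y) (mem_univ x)
  have hkH := norm_sub_le_rpow_of_norm_le_of_lipschitz hα₀ hα₁ hb₀ ha hkL
  refine ⟨hu.comp hk₁, A₀, A₁ * b, A₂ * (b + 2 * a) * b + A₁ * c, ?_, fun x => hu₀ _,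
    fun x => ?_, fun x y => ?_⟩
  · have h₁ : A₁ * b + A₁ * c ≤ A₁ * B := by nlinarith
    have h₂ : (b + 2 * a) * b ≤ 2 * B ^ 2 := by nlinarith
    nlinarith [mul_le_mul_of_nonneg_left h₂ hA₂]
  · rw [hfd]
    exact (ContinuousLinearMap.opNorm_comp_le _ _).trans (mul_le_mul (hu₁ _) (hb x)
      (norm_nonneg _) hA₁)
  · have hsplit : (fderiv ℝ u (k x)).comp (fderiv ℝ k x) - (fderiv ℝ u (k y)).comp (fderiv ℝ k y)
        = (fderiv ℝ u (k x) - fderiv ℝ u (k y)).comp (fderiv ℝ k x)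
          + (fderiv ℝ u (k y)).comp (fderiv ℝ k x - fderiv ℝ k y) := by
      rw [ContinuousLinearMap.sub_comp, ContinuousLinearMap.comp_sub]
      abel
    rw [hfd, hfd, hsplit]
    refine (norm_add_le _ _).trans ?_
    grw [ContinuousLinearMap.opNorm_comp_le, ContinuousLinearMap.opNorm_comp_le, hu₂, hu₁,
      hkH, hb, hc]
    exact le_of_eq (by ring)

end MemC1aLE

theorem memC1aLE_of_subsingleton {E F : Type*} [NormedAddCommGroup E] [NormedSpace ℝ E]
    [NormedAddCommGroup F] [NormedSpace ℝ F] [Subsingleton E] {α B : ℝ} {f : E → F}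
    (hf : ∀ x, ‖f x‖ ≤ B) : MemC1aLE α f B := by
  have hconst : f = fun _ => f 0 := funext fun x => congrArg f (Subsingleton.elim x 0)
  rw [hconst]
  exact ⟨contDiff_const, B, 0, 0, by simp, fun _ => hf 0, fun _ => by simp, fun _ _ => by simp⟩

theorem norm_fderiv_sub_fderiv_le {F : Type*} [NormedAddCommGroup F] [NormedSpace ℝ F]
    {u : ℝ → F} (hu : ContDiff ℝ 2 u) {M : ℝ} (h : ∀ t, ‖iteratedDeriv 2 u t‖ ≤ M) (s t : ℝ) :
    ‖fderiv ℝ u s - fderiv ℝ u t‖ ≤ M * ‖s - t‖ := by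
  have hd : Differentiable ℝ (deriv u) := by
    simpa using hu.differentiable_iteratedDeriv 1 (by norm_num)
  have hsub : fderiv ℝ u s - fderiv ℝ u t
      = ContinuousLinearMap.toSpanSingleton ℝ (deriv u s - deriv u t) := by
    ext; simp [← toSpanSingleton_deriv]
  rw [hsub, ContinuousLinearMap.norm_toSpanSingleton]
  exact convex_univ.norm_image_sub_le_of_norm_deriv_le (fun z _ => hd z)
    (fun z _ => by simpa [iteratedDeriv_succ] using h z) (mem_univ t) (mem_univ s)

section SignedIntegral

variable {X F G : Type*} [MeasurableSpace X] [NormedAddCommGroup F] [NormedSpace ℝ F]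
  [NormedAddCommGroup G] [NormedSpace ℝ G] (μ : SignedMeasure X)

theorem sIntV_smul (c : ℝ) (f : X → F) : sIntV μ (fun x => c • f x) = c • sIntV μ f := by
  simp only [sIntV, integral_smul, smul_sub]

theorem norm_sIntV_le_of_norm_le {f : X → F} {C : ℝ} (hf : ∀ x, ‖f x‖ ≤ C) :
    ‖sIntV μ f‖ ≤ C * μ.totalVariation.real univ := by
  rw [SignedMeasure.totalVariation, measureReal_add_apply, mul_add]
  exact (norm_sub_le _ _).trans (add_le_add (norm_integral_le_of_norm_le_const (ae_of_all _ hf))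
    (norm_integral_le_of_norm_le_const (ae_of_all _ hf)))

theorem sIntV_sub {f g : X → F} (hf : Integrable f μ.totalVariation)
    (hg : Integrable g μ.totalVariation) :
    sIntV μ (fun x => f x - g x) = sIntV μ f - sIntV μ g := by
  obtain ⟨hf₁, hf₂⟩ := integrable_add_measure.1 hf
  obtain ⟨hg₁, hg₂⟩ := integrable_add_measure.1 hg
  simp only [sIntV, integral_sub hf₁ hg₁, integral_sub hf₂ hg₂]
  abel

theorem ContinuousLinearMap.sIntV_comp_comm [CompleteSpace F] [CompleteSpace G] (L : F →L[ℝ] G)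
    {f : X → F} (hf : Integrable f μ.totalVariation) :
    sIntV μ (fun x => L (f x)) = L (sIntV μ f) := by
  obtain ⟨hf₁, hf₂⟩ := integrable_add_measure.1 hf
  simp only [sIntV, L.integral_comp_comm hf₁, L.integral_comp_comm hf₂, map_sub]

end SignedIntegral

section DualNorm

variable {d : ℕ} {α : ℝ} (μ : SignedMeasure (EuclideanSpace ℝ (Fin d)))

theorem dualNorm_eq_sSup :
    dualNorm α μ =
      sSup {r | ∃ f : EuclideanSpace ℝ (Fin d) → ℝ, MemC1aLE α f 1 ∧ r = sIntV μ f} := by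
  simp only [dualNorm, MemC1aLE, Real.norm_eq_abs, and_assoc]

theorem dualNorm_nonneg : 0 ≤ dualNorm α μ := by
  rw [dualNorm_eq_sSup]
  by_cases h : BddAbove {r | ∃ f : EuclideanSpace ℝ (Fin d) → ℝ, MemC1aLE α f 1 ∧ r = sIntV μ f}
  · exact le_csSup h ⟨fun _ => 0, ⟨contDiff_const, 0, 0, 0, by simp⟩, by simp [sIntV]⟩
  · rw [Real.sSup_of_not_bddAbove h]

variable [NeZero d]

theorem sIntV_le_dualNorm {f : EuclideanSpace ℝ (Fin d) → ℝ} (hf : MemC1aLE α f 1) :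
    sIntV μ f ≤ dualNorm α μ := by
  rw [dualNorm_eq_sSup]
  refine le_csSup ⟨μ.totalVariation.real univ, ?_⟩ ⟨f, hf, rfl⟩
  rintro _ ⟨g, hg, rfl⟩
  simpa using (Real.le_norm_self _).trans (norm_sIntV_le_of_norm_le μ hg.norm_le)

theorem abs_sIntV_le_mul_dualNorm {f : EuclideanSpace ℝ (Fin d) → ℝ} {B : ℝ}
    (hf : MemC1aLE α f B) : |sIntV μ f| ≤ B * dualNorm α μ := by
  rcases hf.nonneg.eq_or_lt with hB | hB
  · have : f = 0 := funext fun x => norm_le_zero_iff.1 (hB ▸ hf.norm_le x)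
    simp [this, ← hB, sIntV]
  have hscaled : ∀ c : ℝ, |c| = B⁻¹ → c * sIntV μ f ≤ dualNorm α μ := fun c hc => by
    have := sIntV_le_dualNorm μ
      ((hf.const_smul c).mono (by rw [hc, inv_mul_cancel₀ hB.ne']))
    rwa [sIntV_smul, smul_eq_mul] at this
  have hpos := hscaled B⁻¹ (abs_of_pos (inv_pos.2 hB))
  have hneg := hscaled (-B⁻¹) (by rw [abs_neg, abs_of_pos (inv_pos.2 hB)])
  rw [inv_mul_le_iff₀ hB] at hpos
  rw [neg_mul, ← mul_neg, inv_mul_le_iff₀ hB] at hneg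
  exact abs_le.2 ⟨by linarith, hpos⟩

theorem norm_sIntV_le_mul_dualNorm {F : Type*} [NormedAddCommGroup F] [NormedSpace ℝ F]
    [CompleteSpace F] {g : EuclideanSpace ℝ (Fin d) → F} {B : ℝ} (hg : MemC1aLE α g B)
    (hgi : Integrable g μ.totalVariation) : ‖sIntV μ g‖ ≤ B * dualNorm α μ := by
  obtain ⟨φ, hφ, hφg⟩ := exists_dual_vector'' ℝ (sIntV μ g)
  have hBN : 0 ≤ B * dualNorm α μ := mul_nonneg hg.nonneg (dualNorm_nonneg μ)
  calc ‖sIntV μ g‖ = sIntV μ (fun y => φ (g y)) := by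
        rw [ContinuousLinearMap.sIntV_comp_comm μ φ hgi, hφg]; rfl
    _ ≤ ‖φ‖ * B * dualNorm α μ := (le_abs_self _).trans
        (abs_sIntV_le_mul_dualNorm μ (hg.clm_comp φ))
    _ ≤ B * dualNorm α μ := by rw [mul_assoc]; exact mul_le_of_le_one_left hBN hφ

end DualNorm

section Kernel

variable {X E : Type*} [MeasurableSpace X] [NormedAddCommGroup E] [NormedSpace ℝ E]
  {K : X → E → ℝ}

theorem measurable_fderiv_apply_of_measurable (hK : ∀ x, Measurable fun y => K y x) {x₀ : E}
    (hKd : ∀ y, DifferentiableAt ℝ (K y) x₀) (v : E) :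
    Measurable fun y => fderiv ℝ (K y) x₀ v := by
  refine measurable_of_tendsto_metrizable
    (f := fun (n : ℕ) y => (n : ℝ) • (K y (x₀ + (n : ℝ)⁻¹ • v) - K y x₀))
    (fun n => by fun_prop) (tendsto_pi_nhds.2 fun y => ?_)
  exact (hKd y).hasFDerivAt.lim v (by simpa using tendsto_natCast_atTop_atTop)

theorem measurable_of_forall_measurable_apply [FiniteDimensional ℝ E] {g : X → E →L[ℝ] ℝ}
    (hg : ∀ v, Measurable fun y => g y v) : Measurable g := by
  set b := Module.finBasis ℝ E
  have hsum : g = fun y => ∑ i, g y (b i) • LinearMap.toContinuousLinearMap (b.coord i) := by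
    funext y
    exact ContinuousLinearMap.coe_injective (b.ext fun i => by simp [Finsupp.single_apply])
  rw [hsum]
  exact Finset.measurable_sum _ fun i _ => (hg _).smul_const _

variable [FiniteDimensional ℝ E]

theorem measurable_fderiv_of_measurable (hK : ∀ x, Measurable fun y => K y x)
    (hKd : ∀ y, Differentiable ℝ (K y)) (x₀ : E) : Measurable fun y => fderiv ℝ (K y) x₀ :=
  measurable_of_forall_measurable_apply
    (measurable_fderiv_apply_of_measurable hK fun y => hKd y x₀)

theorem hasFDerivAt_integral_of_bounded (ν : Measure X) [IsFiniteMeasure ν]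
    (hK : ∀ x, Measurable fun y => K y x) (hKd : ∀ y, Differentiable ℝ (K y)) {A A' : ℝ}
    (hKA : ∀ y x, ‖K y x‖ ≤ A) (hKA' : ∀ y x, ‖fderiv ℝ (K y) x‖ ≤ A') (x₀ : E) :
    HasFDerivAt (fun x => ∫ y, K y x ∂ν) (∫ y, fderiv ℝ (K y) x₀ ∂ν) x₀ :=
  hasFDerivAt_integral_of_dominated_of_fderiv_le (bound := fun _ => A') Filter.univ_mem
    (.of_forall fun x => (hK x).aestronglyMeasurable)
    (.of_bound (hK x₀).aestronglyMeasurable A (ae_of_all _ fun y => hKA y x₀))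
    (measurable_fderiv_of_measurable hK hKd x₀).aestronglyMeasurable
    (ae_of_all _ fun y x _ => hKA' y x) (integrable_const A')
    (ae_of_all _ fun y x _ => (hKd y x).hasFDerivAt)

end Kernel

theorem memC1aLE_sIntV_kernel {d : ℕ} [NeZero d] {E : Type*} [NormedAddCommGroup E]
    [NormedSpace ℝ E] [FiniteDimensional ℝ E] {α : ℝ} (hα : 0 < α)
    {K : EuclideanSpace ℝ (Fin d) → E → ℝ} (hK : ∀ x, Measurable fun y => K y x)
    (hKd : ∀ y, Differentiable ℝ (K y)) {M M' H : ℝ} (hM : ∀ x, MemC1aLE α (fun y => K y x) M)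
    (hM' : ∀ x, MemC1aLE α (fun y => fderiv ℝ (K y) x) M')
    (hH : ∀ x₁ x₂, MemC1aLE α (fun y => fderiv ℝ (K y) x₁ - fderiv ℝ (K y) x₂)
      (H * ‖x₁ - x₂‖ ^ α))
    (μ : SignedMeasure (EuclideanSpace ℝ (Fin d))) :
    MemC1aLE α (fun x => sIntV μ fun y => K y x) ((M + M' + H) * dualNorm α μ) := by
  set k' := fun x => sIntV μ fun y => fderiv ℝ (K y) x
  have hKM : ∀ y x, ‖K y x‖ ≤ M := fun y x => (hM x).norm_le y
  have hKM' : ∀ y x, ‖fderiv ℝ (K y) x‖ ≤ M' := fun y x => (hM' x).norm_le y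
  have hint : ∀ x, Integrable (fun y => fderiv ℝ (K y) x) μ.totalVariation := fun x =>
    .of_bound (measurable_fderiv_of_measurable hK hKd x).aestronglyMeasurable M'
      (ae_of_all _ fun y => hKM' y x)
  have hderiv : ∀ x, HasFDerivAt (fun x => sIntV μ fun y => K y x) (k' x) x := fun x =>
    (hasFDerivAt_integral_of_bounded _ hK hKd hKM hKM' x).sub
      (hasFDerivAt_integral_of_bounded _ hK hKd hKM hKM' x)
  have hfderiv : fderiv ℝ (fun x => sIntV μ fun y => K y x) = k' :=
    funext fun x => (hderiv x).fderiv
  have hk'H : ∀ x₁ x₂, ‖k' x₁ - k' x₂‖ ≤ H * dualNorm α μ * ‖x₁ - x₂‖ ^ α := fun x₁ x₂ => by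
    rw [← sIntV_sub μ (hint x₁) (hint x₂), mul_right_comm]
    exact norm_sIntV_le_mul_dualNorm μ (hH x₁ x₂) ((hint x₁).sub (hint x₂))
  refine ⟨contDiff_one_iff_fderiv.2 ⟨fun x => (hderiv x).differentiableAt,
      hfderiv ▸ continuous_of_norm_sub_le_rpow hα hk'H⟩,
    M * dualNorm α μ, M' * dualNorm α μ, H * dualNorm α μ, by rw [add_mul, add_mul],
    fun x => abs_sIntV_le_mul_dualNorm μ (hM x), fun x => ?_, fun x₁ x₂ => hfderiv ▸ hk'H x₁ x₂⟩
  rw [hfderiv]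
  exact norm_sIntV_le_mul_dualNorm μ (hM' x) (hint x)

theorem stmt9_general {d m : ℕ} (α : ℝ) (hα : 0 < α) (hα1 : α ≤ 1)
    (u : ℝ → EuclideanSpace ℝ (Fin m)) (hu : ContDiff ℝ 3 u)
    (Mu : ℕ → ℝ) (hMu : ∀ k ≤ 3, ∀ x, ‖iteratedDeriv k u x‖ ≤ Mu k)
    (K : EuclideanSpace ℝ (Fin d) → EuclideanSpace ℝ (Fin d) → ℝ)
    (hKmeas : Measurable fun p : EuclideanSpace ℝ (Fin d) × EuclideanSpace ℝ (Fin d) =>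
      K p.1 p.2)
    (hKdiff : ∀ y, Differentiable ℝ (fun x => K y x))
    (MK M'K HK : ℝ)
    (hMK : ∀ x, MemC1aLE α (fun y => K y x) MK)
    (hM'K : ∀ x, MemC1aLE α (fun y => fderiv ℝ (fun x' => K y x') x) M'K)
    (hHK : ∀ x₁ x₂, MemC1aLE α
      (fun y => fderiv ℝ (fun x' => K y x') x₁ - fderiv ℝ (fun x' => K y x') x₂)
      (HK * ‖x₁ - x₂‖ ^ α)) :
    ∃ C : ℝ, 0 ≤ C ∧ ∀ μ : SignedMeasure (EuclideanSpace ℝ (Fin d)),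
      MemC1aLE α (fun x => u (sIntV μ (fun y => K y x)))
        (C * (1 + dualNorm α μ + dualNorm α μ ^ 2)) := by
  have hu₀ : ∀ t, ‖u t‖ ≤ Mu 0 := fun t => by simpa using hMu 0 (by norm_num) t
  have hu₁ : ∀ t, ‖fderiv ℝ u t‖ ≤ Mu 1 := fun t => by
    simpa [norm_deriv_eq_norm_fderiv] using hMu 1 (by norm_num) t
  have hu₂ := norm_fderiv_sub_fderiv_le (hu.of_le (by norm_num)) (hMu 2 (by norm_num))
  have hMu₀ : 0 ≤ Mu 0 := (norm_nonneg _).trans (hu₀ 0)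
  have hMu₁ : 0 ≤ Mu 1 := (norm_nonneg _).trans (hu₁ 0)
  have hMu₂ : 0 ≤ Mu 2 := (norm_nonneg _).trans (hMu 2 (by norm_num) 0)
  rcases Nat.eq_zero_or_pos d with rfl | hd
  · refine ⟨Mu 0, hMu₀, fun μ => (memC1aLE_of_subsingleton fun x => hu₀ _).mono ?_⟩
    nlinarith [dualNorm_nonneg (α := α) μ]
  have : NeZero d := ⟨hd.ne'⟩
  have hHK₀ : 0 ≤ HK := nonneg_of_norm_sub_le_mul_rpow fun x₁ x₂ => (hHK x₁ x₂).norm_le 0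
  set S := MK + M'K + HK
  have hS : 0 ≤ S := by linarith [(hMK 0).nonneg, (hM'K 0).nonneg]
  set C := Mu 0 + Mu 1 * S + 2 * Mu 2 * S ^ 2
  refine ⟨C, by positivity, fun μ => ?_⟩
  have hk := memC1aLE_sIntV_kernel hα (fun x => hKmeas.comp (measurable_id.prodMk measurable_const))
    hKdiff hMK hM'K hHK μ
  refine (hk.comp hα.le hα1 (hu.of_le (by norm_num)) hu₀ hu₁ hu₂ hMu₂).mono ?_
  set N := dualNorm α μ
  have hN : 0 ≤ N := dualNorm_nonneg μ
  have hMuS : 0 ≤ Mu 1 * S := by positivity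
  have hMuS₂ : 0 ≤ 2 * Mu 2 * S ^ 2 := by positivity
  calc Mu 0 + Mu 1 * (S * N) + 2 * Mu 2 * (S * N) ^ 2
      = Mu 0 * 1 + Mu 1 * S * N + 2 * Mu 2 * S ^ 2 * N ^ 2 := by ring
    _ ≤ C * 1 + C * N + C * N ^ 2 := by gcongr <;> linarith
    _ = C * (1 + N + N ^ 2) := by ring

/-- for `u ∈ C^{3+α}(ℝ; ℝ^m)` (with `u, u', u'', u'''` bounded and
`u'''` `α`-Hölder) and an admissible kernel `K`, there is a constant `C ≥ 0`,
depending only on `u`, `K`, `α` and `d`, such that for every finite signed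
Borel measure `μ` on `ℝ^d`:
`‖u ∘ k_μ‖_{C^{1+α}} ≤ C(1 + ‖μ‖_* + ‖μ‖_*²)`. -/
theorem stmt9 {d m : ℕ} (α : ℝ) (hα : 0 < α) (hα1 : α ≤ 1)
    (u : ℝ → EuclideanSpace ℝ (Fin m)) (hu : ContDiff ℝ 3 u)
    (Mu : ℕ → ℝ) (hMu : ∀ k ≤ 3, ∀ x, ‖iteratedDeriv k u x‖ ≤ Mu k)
    (Hu : ℝ) (hHu : ∀ x y, ‖iteratedDeriv 3 u x - iteratedDeriv 3 u y‖ ≤ Hu * |x - y| ^ α)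
    (K : EuclideanSpace ℝ (Fin d) → EuclideanSpace ℝ (Fin d) → ℝ)
    (hKmeas : Measurable fun p : EuclideanSpace ℝ (Fin d) × EuclideanSpace ℝ (Fin d) =>
      K p.1 p.2)
    (hKdiff : ∀ y, Differentiable ℝ (fun x => K y x))
    (MK M'K HK : ℝ)
    (hMK : ∀ x, MemC1aLE α (fun y => K y x) MK)
    (hM'K : ∀ x, MemC1aLE α (fun y => fderiv ℝ (fun x' => K y x') x) M'K)
    (hHK : ∀ x₁ x₂, MemC1aLE α
      (fun y => fderiv ℝ (fun x' => K y x') x₁ - fderiv ℝ (fun x' => K y x') x₂)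
      (HK * ‖x₁ - x₂‖ ^ α)) :
    ∃ C : ℝ, 0 ≤ C ∧ ∀ μ : SignedMeasure (EuclideanSpace ℝ (Fin d)),
      MemC1aLE α (fun x => u (sIntV μ (fun y => K y x)))
        (C * (1 + dualNorm α μ + dualNorm α μ ^ 2)) :=
  stmt9_general α hα hα1 u hu Mu hMu K hKmeas hKdiff MK M'K HK hMK hM'K hHK
end

section
/- Let Ω ⊆ ℝ^d be open and convex, let n ∈ ℕ and 0 < α ≤ 1, and let f : Ω → ℝ be n-times continuously differentiable such that each n-th order partial derivative D^β f (β a multi-index with |β| = n) is α-Hölder on Ω with seminorm |D^β f|_α. Then for all x, x₀ ∈ Ω the Taylor remainder of order n of f at x₀ satisfies |R_n[f;x₀](x)| ≤ C_{n,α} · max_{|β|=n} |D^β f|_α · ‖x − x₀‖^{n+α}, where R_n[f;x₀](x) := f(x) − (Taylor polynomial of f of degree n centred at x₀, evaluated at x), and C_{n,α} := d^n / (α(α+1)···(α+n−1)). -/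
open Set

/-!
Induction on `n` along the segment from `x₀` to `x`. With `h = x - x₀`, the directional
derivative `F = Df(·) h` is `Cⁿ⁻¹` and its `(n-1)`-th partials are `α`-Hölder with seminorm at
most `d ‖h‖ H` (expand `h` in the standard basis), while `t ↦ R_n[f;x₀](x₀ + t h)` vanishes at
`0` and has derivative `R_{n-1}[F;x₀](x₀ + t h)`. The induction hypothesis bounds this derivative
by a multiple of `t^{n-1+α}`, and integrating over `[0, 1]` (in the comparison form of the mean
value theorem) gains the factor `1/(n+α)`. This yields the constant `dⁿ/((α+1)⋯(α+n))`, which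
is at most the stated one.
-/

section Coordinates

variable {ι F : Type*} [Fintype ι] [SeminormedAddCommGroup F] [NormedSpace ℝ F]

theorem LinearMap.norm_apply_le_card_mul_norm [DecidableEq ι]
    (L : EuclideanSpace ℝ ι →ₗ[ℝ] F) {B : ℝ} (hB : ∀ i, ‖L (EuclideanSpace.single i 1)‖ ≤ B)
    (h : EuclideanSpace ℝ ι) : ‖L h‖ ≤ Fintype.card ι * B * ‖h‖ := by
  have hL : L h = ∑ i, h i • L (EuclideanSpace.single i 1) := by
    conv_lhs => rw [← (EuclideanSpace.basisFun ι ℝ).sum_repr h]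
    simp [EuclideanSpace.basisFun_apply]
  calc ‖L h‖ ≤ ∑ i, ‖h i‖ * ‖L (EuclideanSpace.single i 1)‖ := by
        rw [hL]; exact (norm_sum_le _ _).trans_eq (by simp only [norm_smul])
    _ ≤ ∑ _i : ι, ‖h‖ * B := by
        gcongr with i
        exacts [PiLp.norm_apply_le h i, hB i]
    _ = Fintype.card ι * B * ‖h‖ := by simp; ring

end Coordinates

section Iterated

variable {𝕜 E F : Type*} [NontriviallyNormedField 𝕜] [NormedAddCommGroup E] [NormedSpace 𝕜 E]
  [NormedAddCommGroup F] [NormedSpace 𝕜 F] {f : E → F} {s : Set E} {x : E}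

theorem iteratedFDerivWithin_fderivWithin_apply {n : ℕ} (hf : ContDiffOn 𝕜 (n + 1) f s)
    (hs : UniqueDiffOn 𝕜 s) (hx : x ∈ s) (h : E) (v : Fin n → E) :
    iteratedFDerivWithin 𝕜 n (fun y => fderivWithin 𝕜 f s y h) s x v =
      iteratedFDerivWithin 𝕜 (n + 1) f s x (Fin.snoc v h) := by
  have hf' : ContDiffOn 𝕜 n (fderivWithin 𝕜 f s) s := hf.fderivWithin hs le_rfl
  rw [show (fun y => fderivWithin 𝕜 f s y h)
      = ContinuousLinearMap.apply 𝕜 F h ∘ fderivWithin 𝕜 f s from rfl,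
    ContinuousLinearMap.iteratedFDerivWithin_comp_left _ (hf' x hx) hs hx le_rfl,
    iteratedFDerivWithin_succ_apply_right hs hx]
  simp [Fin.init_snoc, Fin.snoc_last]

end Iterated

section Taylor

variable {E : Type*} [NormedAddCommGroup E] [NormedSpace ℝ E]

noncomputable def taylorPolyWithin (n : ℕ) (f : E → ℝ) (s : Set E) (x₀ x : E) : ℝ :=
  ∑ k ∈ Finset.range (n + 1),
    ((k.factorial : ℝ))⁻¹ * iteratedFDerivWithin ℝ k f s x₀ (fun _ => x - x₀)

theorem taylorPolyWithin_add_smul (n : ℕ) (f : E → ℝ) (s : Set E) (x₀ h : E) (t : ℝ) :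
    taylorPolyWithin n f s x₀ (x₀ + t • h) =
      ∑ k ∈ Finset.range (n + 1), ((k.factorial : ℝ))⁻¹ * t ^ k *
        iteratedFDerivWithin ℝ k f s x₀ (fun _ => h) := by
  refine Finset.sum_congr rfl fun k _ => ?_
  rw [add_sub_cancel_left,
    ContinuousMultilinearMap.map_smul_univ _ (fun _ => t) (fun _ => h)]
  simp [mul_assoc]

theorem taylorPolyWithin_self (n : ℕ) (f : E → ℝ) (s : Set E) (x₀ : E) :
    taylorPolyWithin n f s x₀ x₀ = f x₀ := by
  simpa [Finset.sum_range_succ'] using taylorPolyWithin_add_smul n f s x₀ 0 0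

theorem hasDerivAt_sum_inv_factorial_mul_pow (n : ℕ) (c : ℕ → ℝ) (t : ℝ) :
    HasDerivAt (fun t => ∑ k ∈ Finset.range (n + 2), ((k.factorial : ℝ))⁻¹ * t ^ k * c k)
      (∑ k ∈ Finset.range (n + 1), ((k.factorial : ℝ))⁻¹ * t ^ k * c (k + 1)) t := by
  refine (HasDerivAt.fun_sum fun k _ =>
    ((hasDerivAt_pow k t).const_mul ((k.factorial : ℝ))⁻¹).mul_const (c k)).congr_deriv ?_
  rw [Finset.sum_range_succ']
  simp only [Nat.cast_zero, zero_mul, mul_zero, add_zero]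
  refine Finset.sum_congr rfl fun k _ => ?_
  rw [Nat.factorial_succ]
  push_cast
  field_simp

theorem hasDerivAt_taylorPolyWithin_add_smul {n : ℕ} {f : E → ℝ} {s : Set E}
    (hf : ContDiffOn ℝ (n + 1) f s) (hs : UniqueDiffOn ℝ s) {x₀ : E} (hx₀ : x₀ ∈ s) (h : E)
    (t : ℝ) :
    HasDerivAt (fun t => taylorPolyWithin (n + 1) f s x₀ (x₀ + t • h))
      (taylorPolyWithin n (fun y => fderivWithin ℝ f s y h) s x₀ (x₀ + t • h)) t := by
  simp only [taylorPolyWithin_add_smul]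
  refine (hasDerivAt_sum_inv_factorial_mul_pow n _ t).congr_deriv
    (Finset.sum_congr rfl fun k hkn => ?_)
  have hk : (k + 1 : WithTop ℕ∞) ≤ n + 1 := by
    exact_mod_cast Nat.succ_le_succ (Finset.mem_range_succ_iff.mp hkn)
  rw [iteratedFDerivWithin_fderivWithin_apply (hf.of_le hk) hs hx₀]
  -- `Fin.comp_snoc` for a constant function says `Fin.snoc (fun _ => h) h = fun _ => h`.
  exact congrArg (fun v => _ * iteratedFDerivWithin ℝ (k + 1) f s x₀ v)
    (Fin.comp_snoc (fun _ => h) (fun _ : Fin k => h) h)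

theorem hasDerivAt_sub_taylorPolyWithin_add_smul {n : ℕ} {f : E → ℝ} {s : Set E}
    (hs : IsOpen s) (hf : ContDiffOn ℝ (n + 1) f s) {x₀ h : E} (hx₀ : x₀ ∈ s) {t : ℝ}
    (ht : x₀ + t • h ∈ s) :
    HasDerivAt (fun t => f (x₀ + t • h) - taylorPolyWithin (n + 1) f s x₀ (x₀ + t • h))
      (fderivWithin ℝ f s (x₀ + t • h) h -
        taylorPolyWithin n (fun y => fderivWithin ℝ f s y h) s x₀ (x₀ + t • h)) t := by
  have hline : HasDerivAt (fun t : ℝ => x₀ + t • h) h t := by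
    simpa using ((hasDerivAt_id t).smul_const h).const_add x₀
  have hfd : HasFDerivAt f (fderivWithin ℝ f s (x₀ + t • h)) (x₀ + t • h) := by
    rw [fderivWithin_of_isOpen hs ht]
    exact ((hf.differentiableOn (by simp) _ ht).differentiableAt (hs.mem_nhds ht)).hasFDerivAt
  exact (hfd.comp_hasDerivAt t hline).sub
    (hasDerivAt_taylorPolyWithin_add_smul hf hs.uniqueDiffOn hx₀ h t)

end Taylor

theorem norm_le_div_of_norm_deriv_le_mul_rpow {E : Type*} [NormedAddCommGroup E]
    [NormedSpace ℝ E] {g g' : ℝ → E} {K p : ℝ} (hp : 0 ≤ p) (hg0 : g 0 = 0)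
    (hg : ∀ t ∈ Icc (0 : ℝ) 1, HasDerivAt g (g' t) t)
    (hbound : ∀ t ∈ Ico (0 : ℝ) 1, ‖g' t‖ ≤ K * t ^ p) :
    ‖g 1‖ ≤ K / (p + 1) := by
  have hB : ∀ t : ℝ, HasDerivAt (fun t => K / (p + 1) * t ^ (p + 1)) (K * t ^ p) t := fun t => by
    refine ((Real.hasDerivAt_rpow_const (Or.inr (by linarith))).const_mul
      (K / (p + 1))).congr_deriv ?_
    rw [add_sub_cancel_right]
    field_simp
  have := image_norm_le_of_norm_deriv_right_le_deriv_boundary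
    (fun t ht => (hg t ht).continuousAt.continuousWithinAt)
    (fun t ht => (hg t (Ico_subset_Icc_self ht)).hasDerivWithinAt)
    (by rw [hg0, norm_zero, Real.zero_rpow (by linarith), mul_zero]) hB hbound
    (right_mem_Icc.2 zero_le_one)
  simpa using this

def PartialsHolderWith {ι : Type*} [Fintype ι] [DecidableEq ι] (n : ℕ) (α H : ℝ)
    (Ω : Set (EuclideanSpace ℝ ι)) (f : EuclideanSpace ℝ ι → ℝ) : Prop :=
  ∀ m : Fin n → ι, ∀ x ∈ Ω, ∀ y ∈ Ω,
    ‖iteratedFDerivWithin ℝ n f Ω x (fun j => EuclideanSpace.single (m j) 1) -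
      iteratedFDerivWithin ℝ n f Ω y (fun j => EuclideanSpace.single (m j) 1)‖ ≤
      H * ‖x - y‖ ^ α

namespace PartialsHolderWith

variable {ι : Type*} [Fintype ι] [DecidableEq ι] {n : ℕ} {α H : ℝ}
  {Ω : Set (EuclideanSpace ℝ ι)} {f : EuclideanSpace ℝ ι → ℝ}

theorem fderivWithin_apply (hH : PartialsHolderWith (n + 1) α H Ω f)
    (hf : ContDiffOn ℝ (n + 1) f Ω) (hΩ : UniqueDiffOn ℝ Ω) (h : EuclideanSpace ℝ ι) :
    PartialsHolderWith n α (Fintype.card ι * ‖h‖ * H) Ω (fun y => fderivWithin ℝ f Ω y h) := by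
  intro m a ha b hb
  let e : Fin n → EuclideanSpace ℝ ι := fun j => EuclideanSpace.single (m j) 1
  let L :=
    (iteratedFDerivWithin ℝ (n + 1) f Ω a - iteratedFDerivWithin ℝ (n + 1) f Ω b).curryRight e
  have hL : ∀ i, ‖L (EuclideanSpace.single i 1)‖ ≤ H * ‖a - b‖ ^ α := fun i => by
    have := hH (Fin.snoc m i) a ha b hb
    have hsnoc : (fun j => EuclideanSpace.single ((Fin.snoc m i : Fin (n + 1) → ι) j) (1 : ℝ)) =
        Fin.snoc e (EuclideanSpace.single i 1) :=
      Fin.comp_snoc (fun k => EuclideanSpace.single k (1 : ℝ)) m i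
    rw [hsnoc] at this
    simpa [L, e, ContinuousMultilinearMap.curryRight_apply] using this
  rw [iteratedFDerivWithin_fderivWithin_apply hf hΩ ha,
    iteratedFDerivWithin_fderivWithin_apply hf hΩ hb]
  convert L.toLinearMap.norm_apply_le_card_mul_norm hL h using 1
  · simp [L, e, ContinuousMultilinearMap.curryRight_apply]
  · ring

theorem nonneg (hH : PartialsHolderWith n α H Ω f) {x y : EuclideanSpace ℝ ι} (hx : x ∈ Ω)
    (hy : y ∈ Ω) (hxy : x ≠ y) : 0 ≤ H := by
  obtain ⟨i⟩ : Nonempty ι := by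
    by_contra hι
    exact hxy (PiLp.ext fun i => (hι ⟨i⟩).elim)
  have hdist : 0 < ‖x - y‖ ^ α := Real.rpow_pos_of_pos (norm_pos_iff.2 (sub_ne_zero.2 hxy)) α
  exact nonneg_of_mul_nonneg_left ((norm_nonneg _).trans (hH (fun _ => i) x hx y hy)) hdist

end PartialsHolderWith

theorem abs_sub_taylorPolyWithin_le {ι : Type*} [Fintype ι] [DecidableEq ι] {α : ℝ}
    (hα : 0 ≤ α) {Ω : Set (EuclideanSpace ℝ ι)} (hΩo : IsOpen Ω) (hΩc : Convex ℝ Ω) (n : ℕ)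
    {f : EuclideanSpace ℝ ι → ℝ} {H : ℝ} (hf : ContDiffOn ℝ n f Ω)
    (hH : PartialsHolderWith n α H Ω f) {x x₀ : EuclideanSpace ℝ ι} (hx : x ∈ Ω)
    (hx₀ : x₀ ∈ Ω) :
    |f x - taylorPolyWithin n f Ω x₀ x| ≤
      (Fintype.card ι ^ n / ∏ j ∈ Finset.range n, (α + j + 1)) * H * ‖x - x₀‖ ^ (n + α) := by
  induction n generalizing f H x with
  | zero =>
    simpa [taylorPolyWithin, Real.norm_eq_abs] using hH Fin.elim0 x hx x₀ hx₀
  | succ n ih =>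
    set h := x - x₀
    have hseg : ∀ t ∈ Icc (0 : ℝ) 1, x₀ + t • h ∈ Ω := fun t ht => hΩc.add_smul_sub_mem hx₀ hx ht
    set K := (Fintype.card ι ^ n / ∏ j ∈ Finset.range n, (α + j + 1)) *
      (Fintype.card ι * ‖h‖ * H) * ‖h‖ ^ (n + α)
    have hbound : ∀ t ∈ Ico (0 : ℝ) 1, ‖fderivWithin ℝ f Ω (x₀ + t • h) h -
        taylorPolyWithin n (fun y => fderivWithin ℝ f Ω y h) Ω x₀ (x₀ + t • h)‖ ≤
          K * t ^ (n + α) := by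
      intro t ht
      have := ih ((hf.fderivWithin hΩo.uniqueDiffOn le_rfl).clm_apply contDiffOn_const)
        (hH.fderivWithin_apply hf hΩo.uniqueDiffOn h) (hseg t (Ico_subset_Icc_self ht))
      rw [add_sub_cancel_left, norm_smul, Real.norm_of_nonneg ht.1,
        Real.mul_rpow ht.1 (norm_nonneg _)] at this
      rw [Real.norm_eq_abs]
      linarith
    have := norm_le_div_of_norm_deriv_le_mul_rpow (by positivity)
      (g := fun t => f (x₀ + t • h) - taylorPolyWithin (n + 1) f Ω x₀ (x₀ + t • h))
      (by simp [taylorPolyWithin_self])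
      (fun t ht => hasDerivAt_sub_taylorPolyWithin_add_smul hΩo hf hx₀ (hseg t ht)) hbound
    have hpow : ‖h‖ ^ ((↑(n + 1) : ℝ) + α) = ‖h‖ ^ ((n : ℝ) + α) * ‖h‖ := by
      rw [Nat.cast_succ, add_right_comm, Real.rpow_add' (norm_nonneg _) (by positivity),
        Real.rpow_one]
    rw [Finset.prod_range_succ, hpow]
    convert this using 1
    · simp [h, Real.norm_eq_abs]
    · simp only [K]
      field_simp
      ring

theorem stmt12_general {d : ℕ} (n : ℕ) (α : ℝ) (hα : 0 < α)
    (Ω : Set (EuclideanSpace ℝ (Fin d))) (hΩopen : IsOpen Ω) (hΩconv : Convex ℝ Ω)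
    (f : EuclideanSpace ℝ (Fin d) → ℝ) (hf : ContDiffOn ℝ n f Ω)
    (H : ℝ)
    (hH : ∀ m : Fin n → Fin d, ∀ x ∈ Ω, ∀ y ∈ Ω,
      ‖(iteratedFDerivWithin ℝ n f Ω x) (fun j => EuclideanSpace.single (m j) 1) -
        (iteratedFDerivWithin ℝ n f Ω y) (fun j => EuclideanSpace.single (m j) 1)‖ ≤
        H * ‖x - y‖ ^ α) :
    ∀ x ∈ Ω, ∀ x₀ ∈ Ω,
      |f x - ∑ k ∈ Finset.range (n + 1),
          ((k.factorial : ℝ))⁻¹ * (iteratedFDerivWithin ℝ k f Ω x₀) (fun _ => x - x₀)| ≤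
        ((d : ℝ) ^ n / ∏ j ∈ Finset.range n, (α + (j : ℝ))) * H *
          ‖x - x₀‖ ^ ((n : ℝ) + α) := by
  intro x hx x₀ hx₀
  have hsharp := abs_sub_taylorPolyWithin_le hα.le hΩopen hΩconv n hf hH hx hx₀
  rw [Fintype.card_fin] at hsharp
  refine hsharp.trans ?_
  rcases eq_or_ne x x₀ with rfl | hne
  · simp [Real.zero_rpow (by positivity : (n : ℝ) + α ≠ 0)]
  · have hH₀ : 0 ≤ H := PartialsHolderWith.nonneg hH hx hx₀ hne
    have hprod : ∏ j ∈ Finset.range n, (α + j) ≤ ∏ j ∈ Finset.range n, (α + j + 1) :=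
      Finset.prod_le_prod (fun j _ => by positivity) fun j _ => by linarith
    gcongr

/-- Hölder estimate for the Taylor remainder.  Let `Ω ⊆ ℝ^d` be
open and convex and `f : Ω → ℝ` be `n`-times continuously differentiable on `Ω`
whose `n`-th order partial derivatives are `α`-Hölder on `Ω` with seminorms at
most `H` (the partial `D^β f`, `|β| = n`, being realised as the `n`-th
derivative evaluated on the corresponding standard basis vectors).  Then for
all `x, x₀ ∈ Ω` the Taylor remainder of order `n` of `f` at `x₀` satisfies
`|R_n[f;x₀](x)| ≤ C_{n,α} · H · ‖x − x₀‖^{n+α}` with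
`C_{n,α} = d^n / (α(α+1)⋯(α+n−1))`. -/
theorem stmt12 {d : ℕ} (n : ℕ) (α : ℝ) (hα : 0 < α) (hα1 : α ≤ 1)
    (Ω : Set (EuclideanSpace ℝ (Fin d))) (hΩopen : IsOpen Ω) (hΩconv : Convex ℝ Ω)
    (f : EuclideanSpace ℝ (Fin d) → ℝ) (hf : ContDiffOn ℝ n f Ω)
    (H : ℝ)
    (hH : ∀ m : Fin n → Fin d, ∀ x ∈ Ω, ∀ y ∈ Ω,
      ‖(iteratedFDerivWithin ℝ n f Ω x) (fun j => EuclideanSpace.single (m j) 1) -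
        (iteratedFDerivWithin ℝ n f Ω y) (fun j => EuclideanSpace.single (m j) 1)‖ ≤
        H * ‖x - y‖ ^ α) :
    ∀ x ∈ Ω, ∀ x₀ ∈ Ω,
      |f x - ∑ k ∈ Finset.range (n + 1),
          ((k.factorial : ℝ))⁻¹ * (iteratedFDerivWithin ℝ k f Ω x₀) (fun _ => x - x₀)| ≤
        ((d : ℝ) ^ n / ∏ j ∈ Finset.range n, (α + (j : ℝ))) * H *
          ‖x - x₀‖ ^ ((n : ℝ) + α) :=
  stmt12_general n α hα Ω hΩopen hΩconv f hf H hH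
end
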